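/- Let α, γ be real numbers with γ not an integer. Then for all real t: ( (1−α)/(1−γ) ) · ₁F₁(α; γ; t) · ₁F₁(2−α; 2−γ; −t) − ( (γ−α)/(1−γ) ) · ₁F₁(1−α; 2−γ; −t) · ₁F₁(α−1; γ; t) = 1. -/

import Mathlib

/-!
Multiply out both products of series by Cauchy products. If `A`, `B`, `C`, `D` are the
coefficient sequences of `₁F₁(α;γ;t)`, `₁F₁(2-α;2-γ;t)`, `₁F₁(1-α;2-γ;t)`, `₁F₁(α-1;γ;t)`,
then `(1-γ)` times the left side has `tⁿ`-coefficient `∑_{m+j=n} w(m,j)` with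
`w(m,j) = (-1)ʲ ((1-α) A_m B_j - (γ-α) D_m C_j)`. For `n = 0` this is `(1-α) - (γ-α) = 1-γ`.
For `n ≥ 1` the sum telescopes along the antidiagonal: `w(m,j) = G(m,j-1) - G(m-1,j)`
(boundary terms absent) for `G(m,j) = (-1)ʲ A_m C_j (α-j-1)/(m+j+1)`, which is checked by
expressing `A_{m+1}`, `D_{m+1}`, `(1-α) B_j`, `C_{j+1}` through `A_m` and `C_j`.

The left side is the Wronskian of the Frobenius solutions `₁F₁(α;γ;t)` and
`t^{1-γ} ₁F₁(α-γ+1;2-γ;t)` of Kummer's equation, divided by `(1-γ) t^{-γ} eᵗ`.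
-/

open Finset

/-- Pochhammer symbol `(a)ₙ = a(a+1)⋯(a+n-1)` for natural `n`. -/
noncomputable def poch (a : ℝ) (n : ℕ) : ℝ := Polynomial.eval a (ascPochhammer ℝ n)

/-- Pochhammer symbol `(a)ₖ` for integer `k`: for `k ≥ 0` the ascending product,
and `(a)₋ₖ = (-1)ᵏ/(1-a)ₖ` for `k ≥ 0`. -/
noncomputable def pochZ (a : ℝ) (k : ℤ) : ℝ :=
  if 0 ≤ k then poch a k.toNat else (-1) ^ (-k).toNat / poch (1 - a) (-k).toNat

/-- The (generally non-terminating) Clausen series `₃F₂(a,b,c;d,e;1)`. -/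
noncomputable def F32 (a b c d e : ℝ) : ℝ :=
  ∑' n : ℕ, poch a n * poch b n * poch c n / (poch d n * poch e n * n.factorial)

/-- A terminating `₃F₂(a,b,c;d,e;1)` summed over `k = 0, …, N`. -/
noncomputable def F32sum (N : ℕ) (a b c d e : ℝ) : ℝ :=
  ∑ k ∈ Finset.range (N + 1),
    poch a k * poch b k * poch c k / (poch d k * poch e k * k.factorial)

/-- The Kummer confluent hypergeometric function `₁F₁(a;b;x)`. -/
noncomputable def F11 (a b x : ℝ) : ℝ :=
  ∑' n : ℕ, poch a n * x ^ n / (poch b n * n.factorial)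

open Filter Topology

theorem Finset.Nat.sum_antidiagonal_succ_eq_zero_of_telescoping {M : Type*} [AddCommGroup M]
    {w G : ℕ → ℕ → M} (h_left : ∀ j, w 0 (j + 1) = G 0 j) (h_right : ∀ m, w (m + 1) 0 = -G m 0)
    (h_mid : ∀ m j, w (m + 1) (j + 1) = G (m + 1) j - G m (j + 1)) (n : ℕ) :
    ∑ p ∈ antidiagonal (n + 1), w p.1 p.2 = 0 := by
  set L : ℕ × ℕ → M := fun p => if p.2 = 0 then 0 else G p.1 (p.2 - 1)
  set R : ℕ × ℕ → M := fun p => if p.1 = 0 then 0 else G (p.1 - 1) p.2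
  have hwLR : ∀ p ∈ antidiagonal (n + 1), w p.1 p.2 = L p - R p := by
    rintro ⟨_ | m, _ | j⟩ hp
    · simp at hp
    · simp [L, R, h_left]
    · simp [L, R, h_right]
    · simp [L, R, h_mid]
  have hL : ∑ p ∈ antidiagonal (n + 1), L p = ∑ p ∈ antidiagonal n, G p.1 p.2 := by
    simp [Nat.sum_antidiagonal_succ', L]
  have hR : ∑ p ∈ antidiagonal (n + 1), R p = ∑ p ∈ antidiagonal n, G p.1 p.2 := by
    simp [Nat.sum_antidiagonal_succ, R]
  rw [sum_congr rfl hwLR, sum_sub_distrib, hL, hR, sub_self]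

theorem summable_norm_of_succ_eq_mul {R : Type*} [NormedRing R] {f r : ℕ → R}
    (hf : ∀ n, f (n + 1) = f n * r n) (hr : Tendsto r atTop (𝓝 0)) :
    Summable fun n => ‖f n‖ := by
  refine summable_of_ratio_norm_eventually_le (r := 1 / 2) (by norm_num) ?_
  filter_upwards [(tendsto_norm_zero.comp hr).eventually (eventually_le_nhds one_half_pos)]
    with n hn
  calc ‖‖f (n + 1)‖‖ = ‖f n * r n‖ := by rw [norm_norm, hf]
    _ ≤ ‖f n‖ * ‖r n‖ := norm_mul_le _ _
    _ ≤ ‖f n‖ * (1 / 2) := by gcongr; exact hn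
    _ = 1 / 2 * ‖‖f n‖‖ := by rw [norm_norm, mul_comm]

lemma poch_zero (a : ℝ) : poch a 0 = 1 := by simp [poch]

lemma poch_succ (a : ℝ) (n : ℕ) : poch a (n + 1) = poch a n * (a + n) := by
  simp [poch, ascPochhammer_succ_eval]

lemma poch_succ_left (a : ℝ) (n : ℕ) : poch a (n + 1) = a * poch (a + 1) n := by
  simp [poch, ascPochhammer_succ_left, Polynomial.eval_comp]

namespace F11

noncomputable def coeff (a b : ℝ) (n : ℕ) : ℝ := poch a n / (poch b n * n.factorial)

lemma coeff_zero (a b : ℝ) : coeff a b 0 = 1 := by simp [coeff, poch_zero]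

lemma coeff_succ (a b : ℝ) (n : ℕ) :
    coeff a b (n + 1) = coeff a b n * ((a + n) / ((b + n) * (n + 1))) := by
  simp only [coeff, poch_succ, Nat.factorial_succ, Nat.cast_mul, Nat.cast_succ, div_eq_mul_inv,
    mul_inv]
  ring

lemma coeff_sub_one_succ (a b : ℝ) (n : ℕ) :
    coeff (a - 1) b (n + 1) = coeff a b n * ((a - 1) / ((b + n) * (n + 1))) := by
  simp only [coeff, poch_succ_left (a - 1), sub_add_cancel, poch_succ b, Nat.factorial_succ,
    Nat.cast_mul, Nat.cast_succ, div_eq_mul_inv, mul_inv]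
  ring

lemma mul_coeff_add_one (a b : ℝ) (n : ℕ) :
    a * coeff (a + 1) b n = (a + n) * coeff a b n := by
  simp only [coeff, ← mul_div_assoc, ← poch_succ_left, poch_succ]
  ring

lemma eq_tsum (a b x : ℝ) : F11 a b x = ∑' n, coeff a b n * x ^ n := by
  simp only [F11, coeff, mul_div_right_comm]

lemma summable_norm_coeff_mul_pow (a b x : ℝ) : Summable fun n => ‖coeff a b n * x ^ n‖ := by
  refine summable_norm_of_succ_eq_mul (r := fun n : ℕ => (a + n) / (b + n) * (x * (1 / (n + 1))))
    (fun n => by simp only [coeff_succ, pow_succ, div_eq_mul_inv, mul_inv]; ring) ?_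
  have hratio : Tendsto (fun n : ℕ => (a + n) / (b + n)) atTop (𝓝 1) := by
    simpa using tendsto_add_mul_div_add_mul_atTop_nhds a b 1 one_ne_zero
  simpa using hratio.mul (tendsto_one_div_add_atTop_nhds_zero_nat.const_mul x)

lemma hasSum_mul_neg (a b c d x : ℝ) :
    HasSum (fun n => (∑ p ∈ antidiagonal n, (-1) ^ p.2 * coeff a b p.1 * coeff c d p.2) * x ^ n)
      (F11 a b x * F11 c d (-x)) := by
  have hf := summable_norm_coeff_mul_pow a b x
  have hg := summable_norm_coeff_mul_pow c d (-x)
  rw [eq_tsum, eq_tsum, tsum_mul_tsum_eq_tsum_sum_antidiagonal_of_summable_norm hf hg]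
  refine (summable_norm_sum_mul_antidiagonal_of_summable_norm hf hg).of_norm.hasSum.congr_fun
    fun n => ?_
  rw [sum_mul]
  refine sum_congr rfl fun p hp => ?_
  rw [← mem_antidiagonal.mp hp, neg_pow, pow_add]
  ring

section Wronskian

variable (α γ : ℝ)

noncomputable def wronskianCoeff (m j : ℕ) : ℝ :=
  (-1) ^ j * (coeff α γ m * ((1 - α) * coeff (2 - α) (2 - γ) j) -
    (γ - α) * coeff (α - 1) γ m * coeff (1 - α) (2 - γ) j)

noncomputable def wronskianCert (m j : ℕ) : ℝ :=
  (-1) ^ j * coeff α γ m * coeff (1 - α) (2 - γ) j * ((α - j - 1) / (m + j + 1))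

lemma one_sub_mul_coeff_two_sub (b : ℝ) (n : ℕ) :
    (1 - α) * coeff (2 - α) b n = (1 - α + n) * coeff (1 - α) b n := by
  rw [← mul_coeff_add_one, show 1 - α + 1 = 2 - α by ring]

variable {α γ}

lemma wronskianCoeff_zero_succ {j : ℕ} (hj : 2 - γ + j ≠ 0) :
    wronskianCoeff α γ 0 (j + 1) = wronskianCert α γ 0 j := by
  have hj1 : (j : ℝ) + 1 ≠ 0 := by positivity
  simp only [wronskianCoeff, wronskianCert]
  rw [one_sub_mul_coeff_two_sub, coeff_succ, coeff_zero, coeff_zero, pow_succ]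
  push_cast
  field_simp
  ring

lemma wronskianCoeff_succ_zero {m : ℕ} (hm : γ + m ≠ 0) :
    wronskianCoeff α γ (m + 1) 0 = -wronskianCert α γ m 0 := by
  have hm1 : (m : ℝ) + 1 ≠ 0 := by positivity
  simp only [wronskianCoeff, wronskianCert]
  rw [coeff_sub_one_succ, coeff_succ]
  simp only [coeff_zero]
  push_cast
  field_simp
  ring

lemma wronskianCoeff_succ_succ {m j : ℕ} (hm : γ + m ≠ 0) (hj : 2 - γ + j ≠ 0) :
    wronskianCoeff α γ (m + 1) (j + 1) =
      wronskianCert α γ (m + 1) j - wronskianCert α γ m (j + 1) := by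
  have hm1 : (m : ℝ) + 1 ≠ 0 := by positivity
  have hj1 : (j : ℝ) + 1 ≠ 0 := by positivity
  have hmj : (m : ℝ) + j + 2 ≠ 0 := by positivity
  simp only [wronskianCoeff, wronskianCert]
  rw [one_sub_mul_coeff_two_sub, coeff_sub_one_succ, coeff_succ α, coeff_succ (1 - α), pow_succ]
  push_cast
  field_simp
  ring

lemma sum_antidiagonal_wronskianCoeff (hγ : ∀ n : ℕ, γ + n ≠ 0) (h2γ : ∀ n : ℕ, 2 - γ + n ≠ 0)
    (n : ℕ) :
    ∑ p ∈ antidiagonal n, wronskianCoeff α γ p.1 p.2 = if n = 0 then 1 - γ else 0 := by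
  rcases n with _ | n
  · simp [wronskianCoeff, coeff_zero]
  · exact Nat.sum_antidiagonal_succ_eq_zero_of_telescoping
      (fun j => wronskianCoeff_zero_succ (h2γ j)) (fun m => wronskianCoeff_succ_zero (hγ m))
      (fun m j => wronskianCoeff_succ_succ (hγ m) (h2γ j)) n

variable (α γ)

lemma hasSum_wronskianCoeff (t : ℝ) :
    HasSum (fun n => (∑ p ∈ antidiagonal n, wronskianCoeff α γ p.1 p.2) * t ^ n)
      ((1 - α) * F11 α γ t * F11 (2 - α) (2 - γ) (-t) -
        (γ - α) * F11 (1 - α) (2 - γ) (-t) * F11 (α - 1) γ t) := by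
  rw [mul_assoc, mul_assoc, mul_comm (F11 (1 - α) _ _)]
  refine (((hasSum_mul_neg α γ (2 - α) (2 - γ) t).mul_left (1 - α)).sub
    ((hasSum_mul_neg (α - 1) γ (1 - α) (2 - γ) t).mul_left (γ - α))).congr_fun fun n => ?_
  simp only [wronskianCoeff, mul_sum, sum_mul, ← sum_sub_distrib]
  exact sum_congr rfl fun p _ => by ring

end Wronskian

end F11

theorem Kummer_example4 (α γ : ℝ) (hγ : ∀ k : ℤ, γ ≠ (k : ℝ)) (t : ℝ) :
    (1 - α) / (1 - γ) * F11 α γ t * F11 (2 - α) (2 - γ) (-t) -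
      (γ - α) / (1 - γ) * F11 (1 - α) (2 - γ) (-t) * F11 (α - 1) γ t = 1 := by
  have hγn (n : ℕ) : γ + n ≠ 0 := fun h => hγ (-n) (by push_cast; linarith)
  have h2γn (n : ℕ) : 2 - γ + n ≠ 0 := fun h => hγ (n + 2) (by push_cast; linarith)
  have h1γ : 1 - γ ≠ 0 := fun h => hγ 1 (by push_cast; linarith)
  have hcoeff : (fun n => (∑ p ∈ antidiagonal n, F11.wronskianCoeff α γ p.1 p.2) * t ^ n) =
      fun n => if n = 0 then 1 - γ else 0 := by
    funext n
    rw [F11.sum_antidiagonal_wronskianCoeff hγn h2γn]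
    split_ifs with hn <;> simp [hn]
  have hW := (hcoeff ▸ F11.hasSum_wronskianCoeff α γ t).unique (hasSum_ite_eq 0 (1 - γ))
  calc _ = ((1 - α) * F11 α γ t * F11 (2 - α) (2 - γ) (-t) -
        (γ - α) * F11 (1 - α) (2 - γ) (-t) * F11 (α - 1) γ t) / (1 - γ) := by ring
    _ = 1 := by rw [hW, div_self h1γ]
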